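/- arXiv:1703.06021 — 2 statements merged into one kernel-verified Lean document; each statement's English description precedes it below -/
import Mathlib

section
/- The swapping relation ≈_sw on choice-free global types, generated by the rule (p₁→q₁:⟨U₁⟩. p₂→q₂:⟨U₂⟩. G) ≈_sw (p₂→q₂:⟨U₂⟩. p₁→q₁:⟨U₁⟩. G) when {p₁,q₁} ∩ {p₂,q₂} = ∅, closed under congruence and equivalence, preserves projections: G ≈_sw G' implies G↾r = G'↾r for every participant r. -/
/-- Choice-free global types: `end` and value exchanges `p→q:⟨U⟩.G` with `p ≠ q`. -/
inductive GT (P U : Type*) : Type _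
  | gend : GT P U
  | comm (p q : P) (hpq : p ≠ q) (u : U) (g : GT P U) : GT P U

/-- Local types: `end`, send and receive prefixes. -/
inductive LTy (P U : Type*) : Type _
  | lend : LTy P U
  | send (q : P) (u : U) (t : LTy P U) : LTy P U
  | recv (p : P) (u : U) (t : LTy P U) : LTy P U

/-- Projection of a global type onto a participant. -/
def proj {P U : Type*} [DecidableEq P] : GT P U → P → LTy P U
  | .gend, _ => .lend
  | .comm p q _ u g, r =>
      if r = p then .send q u (proj g r)
      else if r = q then .recv p u (proj g r)
      else proj g r

/-- The swapping relation `≈_sw` on choice-free global types: the smallest equivalence,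
closed under the congruence rule, containing the swap of two consecutive exchanges
with disjoint participant pairs. -/
inductive SwapEq {P U : Type*} : GT P U → GT P U → Prop
  | swap (p₁ q₁ p₂ q₂ : P) (h₁ : p₁ ≠ q₁) (h₂ : p₂ ≠ q₂) (u₁ u₂ : U) (g : GT P U)
      (d₁ : p₁ ≠ p₂) (d₂ : p₁ ≠ q₂) (d₃ : q₁ ≠ p₂) (d₄ : q₁ ≠ q₂) :
      SwapEq (.comm p₁ q₁ h₁ u₁ (.comm p₂ q₂ h₂ u₂ g))
             (.comm p₂ q₂ h₂ u₂ (.comm p₁ q₁ h₁ u₁ g))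
  | congr (p q : P) (hpq : p ≠ q) (u : U) {g g' : GT P U} :
      SwapEq g g' → SwapEq (.comm p q hpq u g) (.comm p q hpq u g')
  | refl (g : GT P U) : SwapEq g g
  | symm {g g' : GT P U} : SwapEq g g' → SwapEq g' g
  | trans {g₁ g₂ g₃ : GT P U} : SwapEq g₁ g₂ → SwapEq g₂ g₃ → SwapEq g₁ g₃

section Projection

variable {P U : Type*} [DecidableEq P]

theorem proj_comm_of_ne {p q r : P} (hpq : p ≠ q) (u : U) (g : GT P U) (hp : r ≠ p)
    (hq : r ≠ q) : proj (.comm p q hpq u g) r = proj g r := by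
  simp [proj, hp, hq]

theorem proj_comm_congr (p q : P) (hpq : p ≠ q) (u : U) {g g' : GT P U} {r : P}
    (h : proj g r = proj g' r) : proj (.comm p q hpq u g) r = proj (.comm p q hpq u g') r := by
  simp only [proj, h]

theorem proj_comm_comm_of_ne {p₁ q₁ p₂ q₂ r : P} (h₁ : p₁ ≠ q₁) (h₂ : p₂ ≠ q₂) (u₁ u₂ : U)
    (g : GT P U) (hp : r ≠ p₁) (hq : r ≠ q₁) :
    proj (.comm p₁ q₁ h₁ u₁ (.comm p₂ q₂ h₂ u₂ g)) r =
      proj (.comm p₂ q₂ h₂ u₂ (.comm p₁ q₁ h₁ u₁ g)) r := by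
  rw [proj_comm_of_ne h₁ u₁ _ hp hq]
  exact proj_comm_congr p₂ q₂ h₂ u₂ (proj_comm_of_ne h₁ u₁ g hp hq).symm

end Projection

/-- `≈_sw` preserves projections: `G ≈_sw G'` implies `G↾r = G'↾r` for every `r`. -/
theorem swapEq_preserves_proj {P U : Type*} [DecidableEq P] {g g' : GT P U}
    (h : SwapEq g g') (r : P) : proj g r = proj g' r := by
  induction h with
  | swap p₁ q₁ p₂ q₂ h₁ h₂ u₁ u₂ g d₁ d₂ d₃ d₄ =>
      -- `r` takes part in at most one of the two disjoint exchanges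
      obtain ⟨hp, hq⟩ | ⟨hp, hq⟩ : (r ≠ p₁ ∧ r ≠ q₁) ∨ (r ≠ p₂ ∧ r ≠ q₂) := by grind
      · exact proj_comm_comm_of_ne h₁ h₂ u₁ u₂ g hp hq
      · exact (proj_comm_comm_of_ne h₂ h₁ u₂ u₁ g hp hq).symm
  | congr p q hpq u _ ih => exact proj_comm_congr p q hpq u ih
  | refl g => rfl
  | symm _ ih => exact ih.symm
  | trans _ _ ih₁ ih₂ => exact ih₁.trans ih₂
end

section
/- Inversion of traces preserves causal equivalence: if ρ₁ ≍ ρ₂ then the inverse traces satisfy ρ̄₁ ≍ ρ̄₂, where the inverse of a trace is the reversed list of inverted transitions. -/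
universe u v

variable {C : Type u} {S : Type v}

/-- A trace (path) in a reversible LTS: a composable sequence of transitions
`step M η b M'` where `η` is the stamp and `b` the polarity (`true` = forward). -/
inductive RPath (step : C → Finset S → Bool → C → Prop) : C → C → Type (max u v)
  | nil (M : C) : RPath step M M
  | cons {M M' N : C} (η : Finset S) (b : Bool) (h : step M η b M') (ρ : RPath step M' N) :
      RPath step M N

/-- Composition of traces. -/
def RPath.append {step : C → Finset S → Bool → C → Prop} :
    ∀ {M K N : C}, RPath step M K → RPath step K N → RPath step M N
  | _, _, _, .nil _, ρ' => ρ'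
  | _, _, _, .cons η b h ρ, ρ' => .cons η b h (RPath.append ρ ρ')

/-- Length of a trace (number of transitions). -/
def RPath.length {step : C → Finset S → Bool → C → Prop} :
    ∀ {M N : C}, RPath step M N → ℕ
  | _, _, .nil _ => 0
  | _, _, .cons _ _ _ ρ => RPath.length ρ + 1

/-- All transitions of the trace have polarity `b` (`true` = forward-only,
`false` = backward-only). -/
def AllPol {step : C → Finset S → Bool → C → Prop} (b : Bool) :
    ∀ {M N : C}, RPath step M N → Prop
  | _, _, .nil _ => True
  | _, _, .cons _ b' _ ρ => b' = b ∧ AllPol b ρ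

/-- Causal equivalence `≍` on traces: the least equivalence, closed under composition
(here via the congruence rule `congr`), generated by swapping two adjacent concurrent
(disjointly-stamped) transitions and cancelling a transition with its inverse. -/
inductive CEq (step : C → Finset S → Bool → C → Prop) :
    ∀ {M N M' N' : C}, RPath step M N → RPath step M' N' → Prop
  | swap {M M₁ M₂ K N : C} {η₁ η₂ : Finset S} {b₁ b₂ : Bool}
      (hd : Disjoint η₁ η₂)
      (s₁ : step M η₁ b₁ M₁) (s₂ : step M₁ η₂ b₂ K)
      (s₁' : step M η₂ b₂ M₂) (s₂' : step M₂ η₁ b₁ K)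
      (ρ : RPath step K N) :
      CEq step (.cons η₁ b₁ s₁ (.cons η₂ b₂ s₂ ρ)) (.cons η₂ b₂ s₁' (.cons η₁ b₁ s₂' ρ))
  | cancel {M M₁ N : C} {η : Finset S} {b : Bool}
      (s : step M η b M₁) (s' : step M₁ η (!b) M) (ρ : RPath step M N) :
      CEq step (.cons η b s (.cons η (!b) s' ρ)) ρ
  | congr {M M' N : C} {η : Finset S} {b : Bool} (s : step M η b M')
      {ρ ρ' : RPath step M' N} : CEq step ρ ρ' → CEq step (.cons η b s ρ) (.cons η b s ρ')
  | refl {M N : C} (ρ : RPath step M N) : CEq step ρ ρ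
  | symm {M N M' N' : C} {ρ : RPath step M N} {ρ' : RPath step M' N'} :
      CEq step ρ ρ' → CEq step ρ' ρ
  | trans {M N M' N' M'' N'' : C} {ρ : RPath step M N} {ρ' : RPath step M' N'}
      {ρ'' : RPath step M'' N''} : CEq step ρ ρ' → CEq step ρ' ρ'' → CEq step ρ ρ''

/-- `IsInv ρ ρ̄` states that `ρ̄` is the inverse of the trace `ρ`: the reversed sequence
of the inverted transitions (same stamp, opposite polarity, swapped endpoints). -/
inductive IsInv (step : C → Finset S → Bool → C → Prop) :
    ∀ {M N : C}, RPath step M N → RPath step N M → Prop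
  | nil (M : C) : IsInv step (.nil M) (.nil M)
  | cons {M M' N : C} {η : Finset S} {b : Bool}
      (s : step M η b M') (s' : step M' η (!b) M)
      {ρ : RPath step M' N} {ρ' : RPath step N M'} :
      IsInv step ρ ρ' →
      IsInv step (.cons η b s ρ) (ρ'.append (.cons η (!b) s' (.nil M)))

/-! Causal equivalence is generated by local rewrites, so it suffices to check that inverting
each generator yields an equivalence: the inverse of a swap of `t₁; t₂` is a swap of `t̄₂; t̄₁`,
the inverse of a cancellation `t; t̄` is the cancellation `t̄̄; t̄`, and inversion turns prefixing
by `t` into postfixing by `t̄`, under which `≍` is a congruence. Transitivity needs the middle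
trace to have an inverse, which is where the Loop axiom enters. -/

def LoopAxiom (step : C → Finset S → Bool → C → Prop) : Prop :=
  ∀ (M : C) (η : Finset S) (N : C), step M η true N ↔ step N η false M

section

variable {step : C → Finset S → Bool → C → Prop}

theorem LoopAxiom.step_inv (hLoop : LoopAxiom step) {M N : C} {η : Finset S} {b : Bool}
    (h : step M η b N) : step N η (!b) M := by
  cases b
  · exact (hLoop N η M).mpr h
  · exact (hLoop M η N).mp h

namespace RPath

theorem append_nil : ∀ {M N : C} (ρ : RPath step M N), ρ.append (.nil N) = ρ
  | _, _, .nil _ => rfl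
  | _, _, .cons η b h ρ => congrArg (RPath.cons η b h) ρ.append_nil

theorem append_assoc : ∀ {M K L N : C} (ρ : RPath step M K) (σ : RPath step K L)
    (τ : RPath step L N), (ρ.append σ).append τ = ρ.append (σ.append τ)
  | _, _, _, _, .nil _, _, _ => rfl
  | _, _, _, _, .cons η b h ρ, σ, τ => congrArg (RPath.cons η b h) (append_assoc ρ σ τ)

theorem exists_isInv (hLoop : LoopAxiom step) :
    ∀ {M N : C} (ρ : RPath step M N), ∃ σ : RPath step N M, IsInv step ρ σ
  | _, _, .nil M => ⟨.nil M, .nil M⟩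
  | _, _, .cons η b h ρ => by
      obtain ⟨σ, hσ⟩ := exists_isInv hLoop ρ
      exact ⟨_, .cons h (hLoop.step_inv h) hσ⟩

end RPath

theorem IsInv.unique {M N : C} {ρ : RPath step M N} {σ σ' : RPath step N M}
    (h : IsInv step ρ σ) (h' : IsInv step ρ σ') : σ = σ' := by
  induction h with
  | nil => cases h'; rfl
  | cons _ _ _ ih =>
      cases h' with
      | cons _ _ hσ' => rw [ih hσ']

namespace CEq

theorem endpoints_eq {M N M' N' : C} {ρ : RPath step M N} {ρ' : RPath step M' N'}
    (h : CEq step ρ ρ') : M = M' ∧ N = N' := by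
  induction h with
  | congr _ _ ih => exact ⟨rfl, ih.2⟩
  | symm _ ih => exact ⟨ih.1.symm, ih.2.symm⟩
  | trans _ _ ih₁ ih₂ => exact ⟨ih₁.1.trans ih₂.1, ih₁.2.trans ih₂.2⟩
  | _ => exact ⟨rfl, rfl⟩

/-- `CEq.cancel` at polarity `!b` would want `s'` at `!!b`, which is not `b` definitionally. -/
theorem cancel_not {M M₁ N : C} {η : Finset S} {b : Bool}
    (s : step M η (!b) M₁) (s' : step M₁ η b M) (ρ : RPath step M N) :
    CEq step (.cons η (!b) s (.cons η b s' ρ)) ρ := by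
  cases b <;> exact .cancel s s' ρ

theorem append_left {M N P P' : C} (ρ : RPath step M N)
    {τ : RPath step N P} {τ' : RPath step N P'} (h : CEq step τ τ') :
    CEq step (ρ.append τ) (ρ.append τ') := by
  obtain ⟨-, rfl⟩ := h.endpoints_eq
  induction ρ with
  | nil => exact h
  | cons _ _ s _ ih => exact .congr s (ih h)

theorem append {M N M' N' : C} {ρ : RPath step M N} {ρ' : RPath step M' N'}
    (h : CEq step ρ ρ') {P P' : C} {τ : RPath step N P} {τ' : RPath step N' P'}
    (hτ : CEq step τ τ') : CEq step (ρ.append τ) (ρ'.append τ') := by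
  induction h generalizing P P' with
  | swap hd s₁ s₂ s₁' s₂' ρ =>
      exact .trans (append_left (.cons _ _ s₁ (.cons _ _ s₂ ρ)) hτ)
        (.swap hd s₁ s₂ s₁' s₂' (ρ.append τ'))
  | cancel s s' ρ => exact .trans (.cancel s s' (ρ.append τ)) (append_left ρ hτ)
  | @congr _ _ _ _ _ s _ ρ' _ ih =>
      exact .trans (.congr s (ih (.refl τ))) (append_left (.cons _ _ s ρ') hτ)
  | refl ρ => exact append_left ρ hτ
  | symm _ ih => exact .symm (ih hτ.symm)
  | trans h₁ _ ih₁ ih₂ =>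
      obtain ⟨rfl, rfl⟩ := h₁.endpoints_eq
      exact .trans (ih₁ (.refl τ)) (ih₂ hτ)

end CEq

namespace IsInv

theorem ceq_of_swap {M M₁ M₂ K N : C} {η₁ η₂ : Finset S} {b₁ b₂ : Bool}
    (hd : Disjoint η₁ η₂) {s₁ : step M η₁ b₁ M₁} {s₂ : step M₁ η₂ b₂ K}
    {s₁' : step M η₂ b₂ M₂} {s₂' : step M₂ η₁ b₁ K} {ρ : RPath step K N}
    {σ₁ σ₂ : RPath step N M}
    (h₁ : IsInv step (.cons η₁ b₁ s₁ (.cons η₂ b₂ s₂ ρ)) σ₁)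
    (h₂ : IsInv step (.cons η₂ b₂ s₁' (.cons η₁ b₁ s₂' ρ)) σ₂) :
    CEq step σ₁ σ₂ := by
  rcases h₁ with _ | ⟨_, t₁, _ | ⟨_, t₂, hσ⟩⟩
  rcases h₂ with _ | ⟨_, u₂, _ | ⟨_, u₁, hσ'⟩⟩
  rw [hσ.unique hσ', RPath.append_assoc, RPath.append_assoc]
  exact CEq.append_left _ (.swap hd.symm t₂ t₁ u₁ u₂ (.nil _))

theorem ceq_of_cancel {M M₁ N : C} {η : Finset S} {b : Bool}
    {s : step M η b M₁} {s' : step M₁ η (!b) M} {ρ : RPath step M N}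
    {σ₁ σ₂ : RPath step N M}
    (h₁ : IsInv step (.cons η b s (.cons η (!b) s' ρ)) σ₁) (h₂ : IsInv step ρ σ₂) :
    CEq step σ₁ σ₂ := by
  rcases h₁ with _ | ⟨_, t, _ | ⟨_, t', hσ⟩⟩
  rw [hσ.unique h₂, RPath.append_assoc]
  have hcancel := CEq.append_left σ₂ (CEq.cancel_not t' t (.nil _))
  rwa [RPath.append_nil] at hcancel

end IsInv

end

/-- Inversion of traces preserves causal equivalence: if `ρ₁ ≍ ρ₂` then `ρ̄₁ ≍ ρ̄₂`. -/
theorem inv_preserves_ceq (step : C → Finset S → Bool → C → Prop)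
    (hLoop : ∀ (M : C) (η : Finset S) (N : C), step M η true N ↔ step N η false M)
    {M N M' N' : C} {ρ₁ : RPath step M N} {ρ₂ : RPath step M' N'}
    {ρ₁' : RPath step N M} {ρ₂' : RPath step N' M'}
    (h : CEq step ρ₁ ρ₂) (h₁ : IsInv step ρ₁ ρ₁') (h₂ : IsInv step ρ₂ ρ₂') :
    CEq step ρ₁' ρ₂' := by
  induction h with
  | swap hd => exact IsInv.ceq_of_swap hd h₁ h₂
  | cancel => exact IsInv.ceq_of_cancel h₁ h₂
  | congr _ _ ih =>
      rcases h₁ with _ | ⟨_, _, hσ₁⟩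
      rcases h₂ with _ | ⟨_, _, hσ₂⟩
      exact (ih hσ₁ hσ₂).append (.refl _)
  | refl => exact h₁.unique h₂ ▸ .refl _
  | symm _ ih => exact (ih h₂ h₁).symm
  | trans _ _ ih₁ ih₂ =>
      obtain ⟨σ, hσ⟩ := RPath.exists_isInv hLoop _
      exact (ih₁ h₁ hσ).trans (ih₂ hσ h₂)
end
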